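/- For all constants C_E ≥ 1, L ≥ 0, M ≥ 0, K ≥ 0 there exists C ≥ 0 such that the following holds. Let E be a real Banach space, A : E →L[ℝ] E with ‖exp(-tA)‖ ≤ C_E for all t ≥ 0, let g : E → E be Lipschitz with constant L and satisfy ‖g(x)‖ ≤ M for all x ∈ E, let 0 < h ≤ 1, and let u : ℝ → E be differentiable on [0,h] with u'(t) = -A(u t) + g(u t) on [0,h], u 0 = u₀. Assume the map σ ↦ exp(-(1-σ)hA)( g(exp(-σhA) u₀) ) is Lipschitz on [0,1] with constant K·h. Then the local error of the Lawson–Euler method satisfies ‖u(h) - exp(-hA)(u₀ + h • g(u₀))‖ ≤ C · h². -/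

import Mathlib

/-!
Multiplying the equation by `exp(tA)` gives Duhamel's formula, which writes the local error of
the Lawson–Euler step as `∫₀ʰ (exp(-(h-s)A) g(u s) - exp(-hA) g(u₀)) ds`. Inside the integrand,
replacing `u s` by the free flow `exp(-sA) u₀` costs `C_E L ‖u s - exp(-sA) u₀‖ = O(h)` (Duhamel
again, with `‖g‖ ≤ M`), and what remains is `Ψ(s/h) - Ψ(0) = O(h)` by the Lipschitz hypothesis on
`Ψ`. No bound on `A` enters, only the uniform bound `C_E` on the semigroup, and integrating an
`O(h)` integrand over a step of length `h` gives `O(h²)`.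
-/

/-- The operator exponential `exp(tA)` of a continuous linear operator. -/
noncomputable def opexp {E : Type*} [NormedAddCommGroup E] [NormedSpace ℝ E]
    [CompleteSpace E] (A : E →L[ℝ] E) (t : ℝ) : E →L[ℝ] E :=
  NormedSpace.exp (t • A)

open Set intervalIntegral NNReal

section OperatorExponential

variable {E : Type*} [NormedAddCommGroup E] [NormedSpace ℝ E] [CompleteSpace E] (A : E →L[ℝ] E)

@[simp]
lemma opexp_zero : opexp A 0 = 1 := by
  simp [opexp]

lemma opexp_add (s t : ℝ) : opexp A (s + t) = opexp A s * opexp A t := by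
  let _ : NormedAlgebra ℚ (E →L[ℝ] E) := NormedAlgebra.restrictScalars ℚ ℝ (E →L[ℝ] E)
  rw [opexp, add_smul]
  exact NormedSpace.exp_add_of_commute (((Commute.refl A).smul_left s).smul_right t)

lemma opexp_apply_opexp_apply (s t : ℝ) (x : E) :
    opexp A s (opexp A t x) = opexp A (s + t) x := by
  rw [opexp_add]; rfl

@[simp]
lemma opexp_neg_apply_opexp_apply (t : ℝ) (x : E) : opexp A (-t) (opexp A t x) = x := by
  simp [opexp_apply_opexp_apply]

lemma hasDerivAt_opexp (t : ℝ) : HasDerivAt (opexp A) (opexp A t * A) t :=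
  hasDerivAt_exp_smul_const A t

lemma continuous_opexp : Continuous (opexp A) :=
  continuous_iff_continuousAt.2 fun t ↦ (hasDerivAt_opexp A t).continuousAt

lemma norm_opexp_le_of_nonpos {C_E : ℝ} (hA : ∀ t : ℝ, 0 ≤ t → ‖opexp A (-t)‖ ≤ C_E)
    {t : ℝ} (ht : t ≤ 0) : ‖opexp A t‖ ≤ C_E := by
  simpa using hA (-t) (neg_nonneg.2 ht)

end OperatorExponential

section VariationOfConstants

variable {E : Type*} [NormedAddCommGroup E] [NormedSpace ℝ E] [CompleteSpace E]
  {A : E →L[ℝ] E} {u f : ℝ → E} {h : ℝ}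

lemma hasDerivAt_opexp_apply {t : ℝ} (hu : HasDerivAt u (-(A (u t)) + f t) t) :
    HasDerivAt (fun t ↦ opexp A t (u t)) (opexp A t (f t)) t := by
  convert (hasDerivAt_opexp A t).clm_apply hu using 1
  rw [mul_apply_eq_comp, map_add, map_neg, add_neg_cancel_left]

/-- Duhamel's formula for `u' = -A u + f`. -/
theorem eq_opexp_add_integral (hu : ∀ t ∈ Icc 0 h, HasDerivAt u (-(A (u t)) + f t) t)
    (hf : ContinuousOn f (Icc 0 h)) {s : ℝ} (hs : s ∈ Icc 0 h) :
    u s = opexp A (-s) (u 0) + ∫ τ in 0..s, opexp A (τ - s) (f τ) := by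
  have hsub : uIcc 0 s ⊆ Icc 0 h := by
    rw [uIcc_of_le hs.1]; exact Icc_subset_Icc_right hs.2
  have hint : IntervalIntegrable (fun τ ↦ opexp A τ (f τ)) MeasureTheory.volume 0 s :=
    ((continuous_opexp A).continuousOn.clm_apply (hf.mono hsub)).intervalIntegrable
  have hftc := integral_eq_sub_of_hasDerivAt
    (fun t ht ↦ hasDerivAt_opexp_apply (hu t (hsub ht))) hint
  have hshift (τ : ℝ) : opexp A (τ - s) (f τ) = opexp A (-s) (opexp A τ (f τ)) := by
    rw [opexp_apply_opexp_apply, neg_add_eq_sub]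
  simp_rw [hshift, (opexp A (-s)).intervalIntegral_comp_comm hint, hftc]
  simp

end VariationOfConstants

section LawsonEuler

variable {E : Type*} [NormedAddCommGroup E] [NormedSpace ℝ E] [CompleteSpace E]
  (A : E →L[ℝ] E) (g : E → E) (h : ℝ) (u₀ : E)

noncomputable def lawsonEuler : E :=
  opexp A (-h) (u₀ + h • g u₀)

/-- The paper's `Ψ`: the integrand of the order-one elementary integral, with the step
`[0, h]` rescaled to `[0, 1]`. -/
noncomputable def lawsonIntegrand (σ : ℝ) : E :=
  opexp A (-((1 - σ) * h)) (g (opexp A (-(σ * h)) u₀))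

lemma lawsonIntegrand_zero : lawsonIntegrand A g h u₀ 0 = opexp A (-h) (g u₀) := by
  simp [lawsonIntegrand]

lemma lawsonIntegrand_div (hh : h ≠ 0) (s : ℝ) :
    lawsonIntegrand A g h u₀ (s / h) = opexp A (s - h) (g (opexp A (-s) u₀)) := by
  rw [lawsonIntegrand, div_mul_cancel₀ s hh, sub_mul, one_mul, div_mul_cancel₀ s hh, neg_sub]

variable {A g h} {u : ℝ → E} {C_E M : ℝ} {L κ : ℝ≥0}

lemma sub_lawsonEuler_eq_integral (hh : 0 ≤ h) (hg : Continuous g)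
    (hu : ∀ t ∈ Icc 0 h, HasDerivAt u (-(A (u t)) + g (u t)) t) :
    u h - lawsonEuler A g h (u 0) =
      ∫ s in 0..h, (opexp A (s - h) (g (u s)) - opexp A (-h) (g (u 0))) := by
  have hgu : ContinuousOn (fun t ↦ g (u t)) (Icc 0 h) :=
    hg.comp_continuousOn (HasDerivAt.continuousOn hu)
  have hint : IntervalIntegrable (fun s ↦ opexp A (s - h) (g (u s))) MeasureTheory.volume 0 h :=
    ((continuous_opexp A).comp (continuous_sub_right h)).continuousOn.clm_apply
      (by rwa [uIcc_of_le hh]) |>.intervalIntegrable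
  rw [integral_sub hint intervalIntegrable_const, integral_const,
    eq_opexp_add_integral hu hgu ⟨hh, le_rfl⟩, lawsonEuler]
  simp only [sub_zero, map_add, map_smul]
  abel

lemma norm_sub_opexp_le (hA : ∀ t : ℝ, 0 ≤ t → ‖opexp A (-t)‖ ≤ C_E)
    {f : ℝ → E} (hu : ∀ t ∈ Icc 0 h, HasDerivAt u (-(A (u t)) + f t) t)
    (hf : ContinuousOn f (Icc 0 h)) (hfM : ∀ t ∈ Icc 0 h, ‖f t‖ ≤ M) {s : ℝ} (hs : s ∈ Icc 0 h) :
    ‖u s - opexp A (-s) (u 0)‖ ≤ C_E * M * s := by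
  rw [eq_opexp_add_integral hu hf hs, add_sub_cancel_left]
  have hbound : ∀ τ ∈ uIoc 0 s, ‖opexp A (τ - s) (f τ)‖ ≤ C_E * M := by
    intro τ hτ
    rw [uIoc_of_le hs.1] at hτ
    exact (opexp A (τ - s)).le_of_opNorm_le_of_le
      (norm_opexp_le_of_nonpos A hA (by linarith [hτ.2])) (hfM τ ⟨hτ.1.le, hτ.2.trans hs.2⟩)
  simpa [abs_of_nonneg hs.1] using norm_integral_le_of_norm_le_const hbound

lemma norm_localError_integrand_le (hA : ∀ t : ℝ, 0 ≤ t → ‖opexp A (-t)‖ ≤ C_E)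
    (hg : LipschitzWith L g) (hgM : ∀ x, ‖g x‖ ≤ M) (hh : 0 < h)
    (hu : ∀ t ∈ Icc 0 h, HasDerivAt u (-(A (u t)) + g (u t)) t)
    (hΨ : LipschitzOnWith κ (lawsonIntegrand A g h (u 0)) (Icc 0 1)) {s : ℝ} (hs : s ∈ Icc 0 h) :
    ‖opexp A (s - h) (g (u s)) - opexp A (-h) (g (u 0))‖ ≤ C_E ^ 2 * L * M * h + κ := by
  set v := opexp A (-s) (u 0)
  have hC_E : 0 ≤ C_E := (norm_nonneg _).trans (hA 0 le_rfl)
  have hM : 0 ≤ M := (norm_nonneg _).trans (hgM 0)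
  have hv : ‖u s - v‖ ≤ C_E * M * h :=
    (norm_sub_opexp_le hA hu (hg.continuous.comp_continuousOn (HasDerivAt.continuousOn hu))
      (fun t _ ↦ hgM (u t)) hs).trans (by gcongr; exact hs.2)
  have hflow : ‖opexp A (s - h) (g (u s)) - opexp A (s - h) (g v)‖ ≤ C_E ^ 2 * L * M * h := by
    rw [← map_sub]
    calc _ ≤ C_E * (L * (C_E * M * h)) :=
          (opexp A (s - h)).le_of_opNorm_le_of_le
            (norm_opexp_le_of_nonpos A hA (by linarith [hs.2]))
            ((hg.norm_sub_le _ _).trans (by gcongr))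
      _ = C_E ^ 2 * L * M * h := by ring
  have hsh : s / h ∈ Icc (0 : ℝ) 1 := ⟨div_nonneg hs.1 hh.le, (div_le_one hh).2 hs.2⟩
  have hlip : ‖opexp A (s - h) (g v) - opexp A (-h) (g (u 0))‖ ≤ κ := by
    rw [← lawsonIntegrand_div A g h _ hh.ne' s, ← lawsonIntegrand_zero, ← dist_eq_norm]
    calc _ ≤ κ * dist (s / h) 0 := hΨ.dist_le_mul _ hsh 0 ⟨le_rfl, zero_le_one⟩
      _ ≤ κ * 1 := by
          gcongr
          rw [Real.dist_0_eq_abs, abs_of_nonneg hsh.1]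
          exact hsh.2
      _ = κ := mul_one _
  calc _ ≤ _ := norm_sub_le_norm_sub_add_norm_sub _ (opexp A (s - h) (g v)) _
    _ ≤ _ := add_le_add hflow hlip

theorem norm_sub_lawsonEuler_le (hA : ∀ t : ℝ, 0 ≤ t → ‖opexp A (-t)‖ ≤ C_E)
    (hg : LipschitzWith L g) (hgM : ∀ x, ‖g x‖ ≤ M) (hh : 0 < h)
    (hu : ∀ t ∈ Icc 0 h, HasDerivAt u (-(A (u t)) + g (u t)) t)
    (hΨ : LipschitzOnWith κ (lawsonIntegrand A g h (u 0)) (Icc 0 1)) :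
    ‖u h - lawsonEuler A g h (u 0)‖ ≤ (C_E ^ 2 * L * M * h + κ) * h := by
  rw [sub_lawsonEuler_eq_integral hh.le hg.continuous hu]
  have hbound : ∀ s ∈ uIoc 0 h,
      ‖opexp A (s - h) (g (u s)) - opexp A (-h) (g (u 0))‖ ≤ C_E ^ 2 * L * M * h + κ := by
    intro s hs
    rw [uIoc_of_le hh.le] at hs
    exact norm_localError_integrand_le hA hg hgM hh hu hΨ ⟨hs.1.le, hs.2⟩
  simpa [abs_of_pos hh] using norm_integral_le_of_norm_le_const hbound

end LawsonEuler

theorem stmt_15_general (C_E L M K : ℝ) (hL : 0 ≤ L) (hM : 0 ≤ M) (hK : 0 ≤ K) :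
    ∃ C : ℝ, 0 ≤ C ∧
      ∀ (E : Type) [NormedAddCommGroup E] [NormedSpace ℝ E] [CompleteSpace E]
        (A : E →L[ℝ] E),
        (∀ t : ℝ, 0 ≤ t → ‖opexp A (-t)‖ ≤ C_E) →
        ∀ g : E → E, LipschitzWith (Real.toNNReal L) g →
          (∀ x : E, ‖g x‖ ≤ M) →
        ∀ h : ℝ, 0 < h → h ≤ 1 →
        ∀ (u : ℝ → E) (u₀ : E),
          (∀ t ∈ Set.Icc (0 : ℝ) h, HasDerivAt u (-(A (u t)) + g (u t)) t) →
          u 0 = u₀ →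
          LipschitzOnWith (Real.toNNReal (K * h))
            (fun σ : ℝ => opexp A (-((1 - σ) * h)) (g (opexp A (-(σ * h)) u₀)))
            (Set.Icc (0 : ℝ) 1) →
          ‖u h - opexp A (-h) (u₀ + h • g u₀)‖ ≤ C * h ^ 2 := by
  refine ⟨C_E ^ 2 * L * M + K, by positivity, ?_⟩
  intro E _ _ _ A hA g hg hgM h hh _ u u₀ hu hu₀ hΨ
  subst hu₀
  have hbound := norm_sub_lawsonEuler_le hA hg hgM hh hu hΨ
  rw [Real.coe_toNNReal L hL, Real.coe_toNNReal _ (by positivity)] at hbound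
  exact hbound.trans_eq (by ring)

/-- Order theorem for Lawson methods (Theorem 4.5, case `p = 1`): if the integrand
`σ ↦ exp(-(1-σ)hA) g(exp(-σhA)u₀)` is Lipschitz on `[0,1]` with constant `K·h`, then the
local error of the Lawson–Euler method is `O(h²)` uniformly in `A`. -/
theorem stmt_15 (C_E L M K : ℝ) (hCE : 1 ≤ C_E) (hL : 0 ≤ L) (hM : 0 ≤ M) (hK : 0 ≤ K) :
    ∃ C : ℝ, 0 ≤ C ∧
      ∀ (E : Type) [NormedAddCommGroup E] [NormedSpace ℝ E] [CompleteSpace E]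
        (A : E →L[ℝ] E),
        (∀ t : ℝ, 0 ≤ t → ‖opexp A (-t)‖ ≤ C_E) →
        ∀ g : E → E, LipschitzWith (Real.toNNReal L) g →
          (∀ x : E, ‖g x‖ ≤ M) →
        ∀ h : ℝ, 0 < h → h ≤ 1 →
        ∀ (u : ℝ → E) (u₀ : E),
          (∀ t ∈ Set.Icc (0 : ℝ) h, HasDerivAt u (-(A (u t)) + g (u t)) t) →
          u 0 = u₀ →
          LipschitzOnWith (Real.toNNReal (K * h))
            (fun σ : ℝ => opexp A (-((1 - σ) * h)) (g (opexp A (-(σ * h)) u₀)))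
            (Set.Icc (0 : ℝ) 1) →
          ‖u h - opexp A (-h) (u₀ + h • g u₀)‖ ≤ C * h ^ 2 :=
  stmt_15_general C_E L M K hL hM hK
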